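/- For every β ∈ (0, 1/4) and every T > 0 there exists a constant C > 0 (depending only on β and T) such that for all t, t̄ ∈ (0, T], every θ with 0 ≤ θ < min(t, t̄), and every x̄ ∈ [0,1], ∫₀¹ (G^N_{t−θ}(x̄,r) − G^N_{t̄−θ}(x̄,r))² dr ≤ C · |t − t̄|^{2β} · (min(t, t̄) − θ)^{−1/2−2β}. -/

import Mathlib

open Real MeasureTheory

/-- The Neumann heat kernel on `[0,1]`:
`G^N_t(x,y) = 1 + 2 ∑_{k=1}^∞ e^{-k²π²t} cos(kπx) cos(kπy)`. -/
noncomputable def GN (t x y : ℝ) : ℝ :=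
  1 + 2 * ∑' k : ℕ, Real.exp (-((k + 1 : ℝ) ^ 2 * π ^ 2 * t)) *
      Real.cos ((k + 1 : ℝ) * π * x) * Real.cos ((k + 1 : ℝ) * π * y)

open Filter Topology in
lemma integral_cos_const_mul (c : ℝ) (hc : c ≠ 0) :
    ∫ r in (0:ℝ)..1, Real.cos (c * r) = Real.sin c / c := by
  rw [intervalIntegral.integral_comp_mul_left (fun x => Real.cos x) hc]
  simp [integral_cos, div_eq_inv_mul]

lemma integral_cos_int_pi (m : ℤ) (hm : m ≠ 0) :
    ∫ r in (0:ℝ)..1, Real.cos (((m : ℝ) * π) * r) = 0 := by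
  have hc : (m : ℝ) * π ≠ 0 := by
    refine mul_ne_zero ?_ Real.pi_ne_zero
    exact_mod_cast hm
  rw [integral_cos_const_mul _ hc, Real.sin_int_mul_pi, zero_div]

lemma ortho (j k : ℕ) :
    ∫ r in (0:ℝ)..1, Real.cos ((j+1:ℝ)*π*r) * Real.cos ((k+1:ℝ)*π*r)
      = if j = k then 1/2 else 0 := by
  have h : ∀ r : ℝ, Real.cos ((j+1:ℝ)*π*r) * Real.cos ((k+1:ℝ)*π*r)
      = (Real.cos ((((j:ℝ)-k)*π)*r) + Real.cos ((((j:ℝ)+k+2)*π)*r))/2 := by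
    intro r
    have h2 := Real.two_mul_cos_mul_cos ((j+1:ℝ)*π*r) ((k+1:ℝ)*π*r)
    have e1 : (j+1:ℝ)*π*r - (k+1:ℝ)*π*r = (((j:ℝ)-k)*π)*r := by ring
    have e2 : (j+1:ℝ)*π*r + (k+1:ℝ)*π*r = (((j:ℝ)+k+2)*π)*r := by ring
    rw [e1, e2] at h2
    linarith
  simp only [h]
  have int1 : ∀ c : ℝ, IntervalIntegrable (fun r => Real.cos (c * r)) volume 0 1 := by
    intro c; exact (Real.continuous_cos.comp (continuous_const.mul continuous_id)).intervalIntegrable _ _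
  rw [intervalIntegral.integral_div, intervalIntegral.integral_add (int1 _) (int1 _)]
  have hsum : ∫ r in (0:ℝ)..1, Real.cos ((((j:ℝ)+k+2)*π)*r) = 0 := by
    have := integral_cos_int_pi ((j:ℤ)+k+2) (by omega)
    push_cast at this
    exact this
  by_cases hjk : j = k
  · subst hjk
    simp only [sub_self, zero_mul]
    norm_num [hsum]
  · have hdiff : ∫ r in (0:ℝ)..1, Real.cos ((((j:ℝ)-k)*π)*r) = 0 := by
      have hm : ((j:ℤ) - k) ≠ 0 := by
        intro hcon; apply hjk; omega
      have := integral_cos_int_pi ((j:ℤ)-k) hm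
      push_cast at this
      exact this
    simp [hsum, hdiff, hjk]

open Filter Topology in
lemma parseval_ineq (a : ℕ → ℝ) (ha : Summable (fun k => |a k|)) :
    ∫ r in (0:ℝ)..1, (∑' k, a k * Real.cos ((k+1:ℝ)*π*r))^2
      ≤ (1/2) * ∑' k, (a k)^2 := by
  set g : ℕ → ℝ → ℝ := fun k r => a k * Real.cos ((k+1:ℝ)*π*r) with hg_def
  have hcos : ∀ c : ℝ, Continuous (fun r : ℝ => Real.cos (c * r)) :=
    fun c => Real.continuous_cos.comp (continuous_const.mul continuous_id)
  have hg_cont : ∀ k, Continuous (g k) := by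
    intro k; exact continuous_const.mul (Real.continuous_cos.comp (by continuity))
  have hg_bound : ∀ k r, ‖g k r‖ ≤ |a k| := by
    intro k r
    rw [Real.norm_eq_abs, abs_mul]
    exact mul_le_of_le_one_right (abs_nonneg _) (Real.abs_cos_le_one _)
  set f : ℝ → ℝ := fun r => ∑' k, g k r with hf_def
  have hf_cont : Continuous f := continuous_tsum hg_cont ha hg_bound
  have hsummable_pt : ∀ r, Summable (fun k => g k r) := by
    intro r
    exact Summable.of_norm_bounded ha (fun k => hg_bound k r)
  set A := ∑' k, |a k| with hA_def
  set S : ℕ → ℝ → ℝ := fun N r => ∑ k ∈ Finset.range N, g k r with hS_def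
  set ε : ℕ → ℝ := fun N => ∑' k, |a (k+N)| with he_def
  set R : ℕ → ℝ → ℝ := fun N r => ∑' k, g (k+N) r with hR_def
  have hε_nonneg : ∀ N, 0 ≤ ε N := fun N => tsum_nonneg (fun k => abs_nonneg _)
  have hS_bound : ∀ N r, |S N r| ≤ A := by
    intro N r
    calc |S N r| ≤ ∑ k ∈ Finset.range N, |g k r| := Finset.abs_sum_le_sum_abs _ _
    _ ≤ ∑ k ∈ Finset.range N, |a k| :=
        Finset.sum_le_sum (fun k _ => hg_bound k r)
    _ ≤ A := Summable.sum_le_tsum _ (fun k _ => abs_nonneg _) ha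
  have hatail : ∀ N, Summable (fun k => |a (k+N)|) := by
    intro N; exact (summable_nat_add_iff N).2 ha
  have hR_bound : ∀ N r, |R N r| ≤ ε N := by
    intro N r
    calc |R N r| ≤ ∑' k, ‖g (k+N) r‖ :=
      norm_tsum_le_tsum_norm (Summable.of_nonneg_of_le (fun k => norm_nonneg _)
        (fun k => hg_bound (k+N) r) (hatail N))
    _ ≤ ε N := Summable.tsum_le_tsum (fun k => hg_bound (k+N) r)
        (Summable.of_nonneg_of_le (fun k => norm_nonneg _)
          (fun k => hg_bound (k+N) r) (hatail N)) (hatail N)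
  have hsplit : ∀ N r, f r = S N r + R N r := by
    intro N r
    exact (Summable.sum_add_tsum_nat_add N (hsummable_pt r)).symm
  have hR_cont : ∀ N, Continuous (R N) := by
    intro N
    have : R N = fun r => f r - S N r := by
      funext r; rw [hsplit N r]; ring
    rw [this]
    exact hf_cont.sub (by fun_prop)
  have hS_cont : ∀ N, Continuous (S N) := fun N => by fun_prop
  have ha2 : Summable (fun k => (a k)^2) := by
    refine Summable.of_nonneg_of_le (fun k => sq_nonneg _) (fun k => ?_) (ha.mul_left A)
    rw [← sq_abs]
    have h1 : |a k| ≤ A := Summable.le_tsum ha k (fun _ _ => abs_nonneg _)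
    nlinarith [abs_nonneg (a k)]
  -- integral of partial sum squared
  have hS_int : ∀ N, ∫ r in (0:ℝ)..1, (S N r)^2
      = (1/2) * ∑ k ∈ Finset.range N, (a k)^2 := by
    intro N
    have expand : ∀ r, (S N r)^2 = ∑ j ∈ Finset.range N, ∑ k ∈ Finset.range N,
        (a j * a k) * (Real.cos ((j+1:ℝ)*π*r) * Real.cos ((k+1:ℝ)*π*r)) := by
      intro r
      rw [sq, hS_def]
      rw [Finset.sum_mul_sum]
      exact Finset.sum_congr rfl (fun j _ => Finset.sum_congr rfl (fun k _ => by
        simp only [hg_def]; ring)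
      )
    simp only [expand]
    rw [intervalIntegral.integral_finset_sum]
    · have inner : ∀ j ∈ Finset.range N,
          (∫ r in (0:ℝ)..1, ∑ k ∈ Finset.range N,
            (a j * a k) * (Real.cos ((j+1:ℝ)*π*r) * Real.cos ((k+1:ℝ)*π*r)))
          = (a j)^2 * (1/2) := by
        intro j hj
        rw [intervalIntegral.integral_finset_sum]
        · have term : ∀ k ∈ Finset.range N,
              (∫ r in (0:ℝ)..1,
                (a j * a k) * (Real.cos ((j+1:ℝ)*π*r) * Real.cos ((k+1:ℝ)*π*r)))
              = if j = k then a j * a k * (1/2) else 0 := by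
            intro k _
            rw [intervalIntegral.integral_const_mul, ortho j k]
            split_ifs <;> ring
          rw [Finset.sum_congr rfl term, Finset.sum_ite_eq (Finset.range N) j
            (fun k => a j * a k * (1/2))]
          simp [hj, sq]
        · intro k _
          exact (Continuous.intervalIntegrable
            (continuous_const.mul ((hcos _).mul (hcos _))) _ _)
      rw [Finset.sum_congr rfl inner, ← Finset.sum_mul]
      ring
    · intro j _
      exact (Continuous.intervalIntegrable (continuous_finset_sum _
        (fun k _ => continuous_const.mul ((hcos _).mul (hcos _)))) _ _)
  -- main estimate for each N
  have est : ∀ N, ∫ r in (0:ℝ)..1, (f r)^2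
      ≤ (1/2) * ∑' k, (a k)^2 + (2*A*ε N + (ε N)^2) := by
    intro N
    have hsq : ∀ r, (f r)^2 = (S N r)^2 + (2 * S N r * R N r + (R N r)^2) := by
      intro r; rw [hsplit N r]; ring
    have hI1 : IntervalIntegrable (fun r => (S N r)^2) volume 0 1 :=
      Continuous.intervalIntegrable (by fun_prop) _ _
    have hI2 : IntervalIntegrable (fun r => 2 * S N r * R N r + (R N r)^2) volume 0 1 :=
      Continuous.intervalIntegrable (by
        have h1 := hS_cont N; have h2 := hR_cont N; fun_prop) _ _
    calc ∫ r in (0:ℝ)..1, (f r)^2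
        = ∫ r in (0:ℝ)..1, ((S N r)^2 + (2 * S N r * R N r + (R N r)^2)) := by
          simp only [hsq]
      _ = (∫ r in (0:ℝ)..1, (S N r)^2)
          + ∫ r in (0:ℝ)..1, (2 * S N r * R N r + (R N r)^2) :=
          intervalIntegral.integral_add hI1 hI2
      _ ≤ (1/2) * ∑' k, (a k)^2 + (2*A*ε N + (ε N)^2) := by
          gcongr
          · rw [hS_int N]
            have := Summable.sum_le_tsum (Finset.range N) (fun k _ => sq_nonneg (a k)) ha2
            linarith
          · calc ∫ r in (0:ℝ)..1, (2 * S N r * R N r + (R N r)^2)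
                ≤ ∫ _ in (0:ℝ)..1, (2*A*ε N + (ε N)^2) := by
                  apply intervalIntegral.integral_mono_on (by norm_num) hI2
                    (intervalIntegrable_const)
                  intro r _
                  have h1 := hS_bound N r
                  have h2 := hR_bound N r
                  have h3 : S N r * R N r ≤ A * ε N := by
                    calc S N r * R N r ≤ |S N r * R N r| := le_abs_self _
                    _ = |S N r| * |R N r| := abs_mul _ _
                    _ ≤ A * ε N := mul_le_mul h1 h2 (abs_nonneg _)
                        ((abs_nonneg _).trans h1)
                  have h4 : (R N r)^2 ≤ (ε N)^2 := by
                    rw [← sq_abs]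
                    exact pow_le_pow_left₀ (abs_nonneg _) h2 2
                  linarith
            _ = 2*A*ε N + (ε N)^2 := by simp
  -- take the limit
  have hε_tend : Tendsto ε atTop (𝓝 0) := tendsto_sum_nat_add (fun k => |a k|)
  have htend : Tendsto (fun N => (1/2) * ∑' k, (a k)^2 + (2*A*ε N + (ε N)^2)) atTop
      (𝓝 ((1/2) * ∑' k, (a k)^2)) := by
    have : Tendsto (fun N => 2*A*ε N + (ε N)^2) atTop (𝓝 (2*A*0 + 0^2)) := by
      exact ((hε_tend.const_mul (2*A)).add (hε_tend.pow 2))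
    have h2 : Tendsto (fun N => (1/2) * ∑' k, (a k)^2 + (2*A*ε N + (ε N)^2)) atTop
        (𝓝 ((1/2) * ∑' k, (a k)^2 + (2*A*0 + 0^2))) := tendsto_const_nhds.add this
    norm_num at h2
    exact h2
  exact ge_of_tendsto htend (Eventually.of_forall est)


lemma exp_diff_aux (lam : ℝ) (hlam : 0 ≤ lam) {s s' : ℝ} (h : s' ≤ s) :
    |Real.exp (-(lam*s)) - Real.exp (-(lam*s'))|
      ≤ min 1 (lam * (s - s')) * Real.exp (-(lam * s')) := by
  have hle : Real.exp (-(lam*s)) ≤ Real.exp (-(lam*s')) := by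
    apply Real.exp_le_exp.2; nlinarith
  rw [abs_sub_comm, abs_of_nonneg (sub_nonneg.2 hle)]
  have key : Real.exp (-(lam*s')) - Real.exp (-(lam*s))
      = (1 - Real.exp (-(lam*(s-s')))) * Real.exp (-(lam*s')) := by
    rw [sub_mul, one_mul, ← Real.exp_add]; ring_nf
  rw [key]
  apply mul_le_mul_of_nonneg_right _ (Real.exp_nonneg _)
  apply le_min
  · linarith [Real.exp_nonneg (-(lam*(s-s')))]
  · have := Real.add_one_le_exp (-(lam*(s-s')))
    linarith

lemma exp_diff_bound (lam : ℝ) (hlam : 0 ≤ lam) (s s' : ℝ) :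
    |Real.exp (-(lam*s)) - Real.exp (-(lam*s'))|
      ≤ min 1 (lam * |s - s'|) * Real.exp (-(lam * min s s')) := by
  rcases le_total s' s with h | h
  · rw [abs_of_nonneg (sub_nonneg.2 h), min_eq_right h]
    exact exp_diff_aux lam hlam h
  · rw [abs_sub_comm, abs_sub_comm s s', abs_of_nonneg (sub_nonneg.2 h), min_eq_left h]
    exact exp_diff_aux lam hlam h

lemma min_one_le_rpow {x b : ℝ} (hx : 0 ≤ x) (hb0 : 0 < b) (hb1 : b ≤ 1) :
    min 1 x ≤ x ^ b := by
  rcases le_total 1 x with h | h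
  · rw [min_eq_left h]
    exact Real.one_le_rpow h hb0.le
  · rw [min_eq_right h]
    rcases eq_or_lt_of_le hx with h0 | h0
    · rw [← h0, Real.zero_rpow hb0.ne']
    · calc x = x ^ (1:ℝ) := (Real.rpow_one x).symm
      _ ≤ x ^ b := Real.rpow_le_rpow_of_exponent_ge h0 h hb1

-- supremum bound : y^a e^{-yd} ≤ (a/d)^a
lemma rpow_mul_exp_le {y d aa : ℝ} (hy : 0 ≤ y) (hd : 0 < d) (ha : 0 < aa) :
    y ^ aa * Real.exp (-(y*d)) ≤ (aa/d) ^ aa := by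
  have h1 : y*d/aa ≤ Real.exp (y*d/aa) := by
    have := Real.add_one_le_exp (y*d/aa); linarith
  have h2 : (y*d/aa) ^ aa ≤ Real.exp (y*d) := by
    calc (y*d/aa) ^ aa ≤ (Real.exp (y*d/aa)) ^ aa :=
          Real.rpow_le_rpow (by positivity) h1 ha.le
    _ = Real.exp (y*d) := by
        rw [← Real.exp_mul]; congr 1; field_simp
  have h3 : y ^ aa ≤ (aa/d) ^ aa * Real.exp (y*d) := by
    have hy' : y = (y*d/aa) * (aa/d) := by field_simp
    calc y ^ aa = (y*d/aa) ^ aa * (aa/d) ^ aa := by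
          rw [← Real.mul_rpow (by positivity) (by positivity), ← hy']
    _ ≤ Real.exp (y*d) * (aa/d) ^ aa :=
          mul_le_mul_of_nonneg_right h2 (by positivity)
    _ = (aa/d) ^ aa * Real.exp (y*d) := mul_comm _ _
  calc y ^ aa * Real.exp (-(y*d)) ≤ ((aa/d) ^ aa * Real.exp (y*d)) * Real.exp (-(y*d)) :=
        mul_le_mul_of_nonneg_right h3 (Real.exp_nonneg _)
  _ = (aa/d) ^ aa := by rw [mul_assoc, ← Real.exp_add]; simp

lemma summable_exp_mul (x : ℝ) (hx : 0 < x) :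
    Summable (fun k : ℕ => Real.exp (-((k+1:ℝ)*x))) := by
  have hq0 : 0 ≤ Real.exp (-x) := Real.exp_nonneg _
  have hq1 : Real.exp (-x) < 1 := Real.exp_lt_one_iff.2 (by linarith)
  have : ∀ k : ℕ, Real.exp (-((k+1:ℝ)*x)) = Real.exp (-x) ^ (k+1) := by
    intro k
    rw [← Real.exp_nat_mul]
    congr 1; push_cast; ring
  simp only [this, pow_succ]
  exact (summable_geometric_of_lt_one hq0 hq1).mul_right _

lemma tsum_exp_le (x : ℝ) (hx : 0 < x) :
    ∑' k : ℕ, Real.exp (-((k+1:ℝ)*x)) ≤ 1/x := by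
  have hq0 : 0 ≤ Real.exp (-x) := Real.exp_nonneg _
  have hq1 : Real.exp (-x) < 1 := Real.exp_lt_one_iff.2 (by linarith)
  have heq : ∀ k : ℕ, Real.exp (-((k+1:ℝ)*x)) = Real.exp (-x) ^ k * Real.exp (-x) := by
    intro k
    rw [← pow_succ, ← Real.exp_nat_mul]
    congr 1; push_cast; ring
  rw [tsum_congr heq, tsum_mul_right, tsum_geometric_of_lt_one hq0 hq1]
  rw [mul_comm, ← div_eq_mul_inv, div_le_div_iff₀ (by linarith) hx]
  have hexp := Real.add_one_le_exp x
  have hq : Real.exp (-x) * Real.exp x = 1 := by rw [← Real.exp_add]; simp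
  nlinarith [Real.exp_nonneg (-x)]


lemma weight_pt (d aa : ℝ) (hd : 0 < d) (ha : 0 < aa) (k : ℕ) :
    ((k+1:ℝ)^2) ^ aa * Real.exp (-((k+1:ℝ)^2*d))
      ≤ (2*aa/d) ^ aa * Real.exp 1 * Real.exp (-((k+1:ℝ)*Real.sqrt (d/2))) := by
  set x := Real.sqrt (d/2) with hx_def
  have hx : 0 < x := Real.sqrt_pos.2 (by linarith)
  have hx2 : x^2 = d/2 := Real.sq_sqrt (by linarith)
  have hn : (0:ℝ) ≤ (k+1:ℝ) := by positivity
  have hsplit : Real.exp (-((k+1:ℝ)^2*d))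
      = Real.exp (-((k+1:ℝ)^2*(d/2))) * Real.exp (-((k+1:ℝ)^2*(d/2))) := by
    rw [← Real.exp_add]; congr 1; ring
  have h1 : ((k+1:ℝ)^2) ^ aa * Real.exp (-((k+1:ℝ)^2*(d/2))) ≤ (2*aa/d) ^ aa := by
    have := rpow_mul_exp_le (y := (k+1:ℝ)^2) (d := d/2) (aa := aa)
      (by positivity) (by linarith) ha
    calc ((k+1:ℝ)^2) ^ aa * Real.exp (-((k+1:ℝ)^2*(d/2)))
        ≤ (aa/(d/2)) ^ aa := this
      _ = (2*aa/d) ^ aa := by congr 1; field_simp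
  have h2 : Real.exp (-((k+1:ℝ)^2*(d/2))) ≤ Real.exp 1 * Real.exp (-((k+1:ℝ)*x)) := by
    rw [← Real.exp_add]
    apply Real.exp_le_exp.2
    have hsq : (0:ℝ) ≤ ((k+1:ℝ)*x - 1)^2 := sq_nonneg _
    nlinarith [mul_nonneg hn hx.le]
  calc ((k+1:ℝ)^2) ^ aa * Real.exp (-((k+1:ℝ)^2*d))
      = (((k+1:ℝ)^2) ^ aa * Real.exp (-((k+1:ℝ)^2*(d/2)))) *
          Real.exp (-((k+1:ℝ)^2*(d/2))) := by rw [hsplit]; ring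
    _ ≤ (2*aa/d) ^ aa * (Real.exp 1 * Real.exp (-((k+1:ℝ)*x))) := by
        apply mul_le_mul h1 h2 (Real.exp_nonneg _) (by positivity)
    _ = (2*aa/d) ^ aa * Real.exp 1 * Real.exp (-((k+1:ℝ)*x)) := by ring

lemma summable_weight (d aa : ℝ) (hd : 0 < d) (ha : 0 < aa) :
    Summable (fun k : ℕ => ((k+1:ℝ)^2) ^ aa * Real.exp (-((k+1:ℝ)^2*d))) := by
  have hx : 0 < Real.sqrt (d/2) := Real.sqrt_pos.2 (by linarith)
  refine Summable.of_nonneg_of_le (fun k => by positivity) (weight_pt d aa hd ha)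
    ((summable_exp_mul _ hx).mul_left _)

lemma sum_weight (d aa : ℝ) (hd : 0 < d) (ha : 0 < aa) :
    ∑' k : ℕ, ((k+1:ℝ)^2) ^ aa * Real.exp (-((k+1:ℝ)^2*d))
      ≤ (2*aa/d) ^ aa * Real.exp 1 * (1/Real.sqrt (d/2)) := by
  have hx : 0 < Real.sqrt (d/2) := Real.sqrt_pos.2 (by linarith)
  have hsumr : Summable (fun k : ℕ =>
      (2*aa/d) ^ aa * Real.exp 1 * Real.exp (-((k+1:ℝ)*Real.sqrt (d/2)))) :=
    (summable_exp_mul _ hx).mul_left _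
  calc ∑' k : ℕ, ((k+1:ℝ)^2) ^ aa * Real.exp (-((k+1:ℝ)^2*d))
      ≤ ∑' k : ℕ, (2*aa/d) ^ aa * Real.exp 1 * Real.exp (-((k+1:ℝ)*Real.sqrt (d/2))) :=
        Summable.tsum_le_tsum (weight_pt d aa hd ha) (summable_weight d aa hd ha) hsumr
    _ = (2*aa/d) ^ aa * Real.exp 1 * ∑' k : ℕ, Real.exp (-((k+1:ℝ)*Real.sqrt (d/2))) :=
        tsum_mul_left
    _ ≤ (2*aa/d) ^ aa * Real.exp 1 * (1/Real.sqrt (d/2)) :=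
        mul_le_mul_of_nonneg_left (tsum_exp_le _ hx) (by positivity)
lemma summable_gn_term (t x y : ℝ) (ht : 0 < t) :
    Summable (fun k : ℕ => Real.exp (-((k + 1 : ℝ) ^ 2 * π ^ 2 * t)) *
      Real.cos ((k + 1 : ℝ) * π * x) * Real.cos ((k + 1 : ℝ) * π * y)) := by
  apply Summable.of_norm_bounded (summable_exp_mul (π^2*t) (by positivity))
  intro k
  have hn : (0:ℝ) ≤ (k:ℝ)+1 := by positivity
  have h1 : Real.exp (-((k + 1 : ℝ) ^ 2 * π ^ 2 * t)) ≤ Real.exp (-((k+1:ℝ)*(π^2*t))) := by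
    apply Real.exp_le_exp.2
    have h2 : (k+1:ℝ) ≤ (k+1:ℝ)^2 := by nlinarith
    have h3 : (0:ℝ) < π^2*t := by positivity
    nlinarith
  rw [Real.norm_eq_abs, abs_mul, abs_mul, Real.abs_exp]
  have hc1 := Real.abs_cos_le_one ((k + 1 : ℝ) * π * x)
  have hc2 := Real.abs_cos_le_one ((k + 1 : ℝ) * π * y)
  have he := Real.exp_nonneg (-((k + 1 : ℝ) ^ 2 * π ^ 2 * t))
  calc Real.exp (-((k + 1 : ℝ) ^ 2 * π ^ 2 * t)) * |Real.cos ((k + 1 : ℝ) * π * x)| *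
        |Real.cos ((k + 1 : ℝ) * π * y)|
      ≤ Real.exp (-((k + 1 : ℝ) ^ 2 * π ^ 2 * t)) * 1 * 1 := by
        apply mul_le_mul _ hc2 (abs_nonneg _) (by positivity)
        exact mul_le_mul_of_nonneg_left hc1 he
    _ = Real.exp (-((k + 1 : ℝ) ^ 2 * π ^ 2 * t)) := by ring
    _ ≤ Real.exp (-((k+1:ℝ)*(π^2*t))) := h1

lemma GN_diff (s s' x : ℝ) (hs : 0 < s) (hs' : 0 < s') (r : ℝ) :
    GN s x r - GN s' x r
      = ∑' k : ℕ, (2*(Real.exp (-((k+1:ℝ)^2*π^2*s)) - Real.exp (-((k+1:ℝ)^2*π^2*s')))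
          * Real.cos ((k+1:ℝ)*π*x)) * Real.cos ((k+1:ℝ)*π*r) := by
  have h1 := summable_gn_term s x r hs
  have h2 := summable_gn_term s' x r hs'
  unfold GN
  have e1 : (1 + 2 * ∑' k : ℕ, Real.exp (-((k + 1 : ℝ) ^ 2 * π ^ 2 * s)) *
      Real.cos ((k + 1 : ℝ) * π * x) * Real.cos ((k + 1 : ℝ) * π * r))
      - (1 + 2 * ∑' k : ℕ, Real.exp (-((k + 1 : ℝ) ^ 2 * π ^ 2 * s')) *
      Real.cos ((k + 1 : ℝ) * π * x) * Real.cos ((k + 1 : ℝ) * π * r))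
      = 2 * ((∑' k : ℕ, Real.exp (-((k + 1 : ℝ) ^ 2 * π ^ 2 * s)) *
      Real.cos ((k + 1 : ℝ) * π * x) * Real.cos ((k + 1 : ℝ) * π * r))
      - ∑' k : ℕ, Real.exp (-((k + 1 : ℝ) ^ 2 * π ^ 2 * s')) *
      Real.cos ((k + 1 : ℝ) * π * x) * Real.cos ((k + 1 : ℝ) * π * r)) := by ring
  rw [e1, ← Summable.tsum_sub h1 h2, ← tsum_mul_left]
  exact tsum_congr (fun k => by ring)


set_option maxHeartbeats 1000000 in
theorem neumann_kernel_time_increment_L2 (β T : ℝ) (hβ0 : 0 < β) (hβ1 : β < 1 / 4)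
    (hT : 0 < T) :
    ∃ C : ℝ, 0 < C ∧ ∀ t t' θ x' : ℝ, 0 < t → t ≤ T → 0 < t' → t' ≤ T →
      0 ≤ θ → θ < min t t' → x' ∈ Set.Icc (0 : ℝ) 1 →
      ∫ r in (0 : ℝ)..1, (GN (t - θ) x' r - GN (t' - θ) x' r) ^ 2 ≤
        C * |t - t'| ^ (2 * β) * (min t t' - θ) ^ (-(1/2) - 2 * β) := by
  have hb0 : (0:ℝ) < 2*β := by linarith
  have hb1 : (2:ℝ)*β ≤ 1 := by linarith
  have hC : 0 < 2 * Real.exp 1 * (2*β) ^ (2*β) := by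
    have := Real.rpow_pos_of_pos hb0 (2*β)
    positivity
  refine ⟨2 * Real.exp 1 * (2*β) ^ (2*β), hC, ?_⟩
  intro t t' θ x' ht htT ht' ht'T hθ hθmin hx'
  set m := min t t' - θ with hm_def
  have hm : 0 < m := by simp only [hm_def]; linarith
  have hmt : θ < t := lt_of_lt_of_le hθmin (min_le_left t t')
  have hmt' : θ < t' := lt_of_lt_of_le hθmin (min_le_right t t')
  have hs : 0 < t - θ := by linarith
  have hs' : 0 < t' - θ := by linarith
  set Δ := |t - t'| with hΔ_def
  have hΔ0 : 0 ≤ Δ := abs_nonneg _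
  set a : ℕ → ℝ := fun k =>
    2*(Real.exp (-((k+1:ℝ)^2*π^2*(t-θ))) - Real.exp (-((k+1:ℝ)^2*π^2*(t'-θ))))
      * Real.cos ((k+1:ℝ)*π*x') with ha_def
  -- coefficient bound
  have habs : ∀ k : ℕ, |a k| ≤
      2 * min 1 (((k+1:ℝ)^2*π^2) * Δ) * Real.exp (-(((k+1:ℝ)^2*π^2) * m)) := by
    intro k
    have hlam : (0:ℝ) ≤ (k+1:ℝ)^2*π^2 := by positivity
    have hE := exp_diff_bound ((k+1:ℝ)^2*π^2) hlam (t-θ) (t'-θ)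
    rw [show (t-θ)-(t'-θ) = t - t' by ring] at hE
    rw [show min (t-θ) (t'-θ) = m by rw [hm_def, ← min_sub_sub_right]] at hE
    have hc := Real.abs_cos_le_one ((k+1:ℝ)*π*x')
    calc |a k| = 2 * |Real.exp (-((k+1:ℝ)^2*π^2*(t-θ)))
          - Real.exp (-((k+1:ℝ)^2*π^2*(t'-θ)))| * |Real.cos ((k+1:ℝ)*π*x')| := by
          rw [ha_def]
          simp only [abs_mul, abs_two]
      _ ≤ 2 * (min 1 (((k+1:ℝ)^2*π^2) * Δ) * Real.exp (-(((k+1:ℝ)^2*π^2) * m))) * 1 := by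
          apply mul_le_mul _ hc (abs_nonneg _) (by positivity)
          exact mul_le_mul_of_nonneg_left hE (by norm_num)
      _ = 2 * min 1 (((k+1:ℝ)^2*π^2) * Δ) * Real.exp (-(((k+1:ℝ)^2*π^2) * m)) := by ring
  have hsq : ∀ k : ℕ, (a k)^2 ≤ (4 * (π^2*Δ)^(2*β)) *
      (((k+1:ℝ)^2)^(2*β) * Real.exp (-((k+1:ℝ)^2*(2*π^2*m)))) := by
    intro k
    have hmin0 : 0 ≤ min 1 (((k+1:ℝ)^2*π^2) * Δ) :=
      le_min zero_le_one (by positivity)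
    have hmin1 : min 1 (((k+1:ℝ)^2*π^2) * Δ) ≤ 1 := min_le_left _ _
    have hminr : min 1 (((k+1:ℝ)^2*π^2) * Δ) ≤ (((k+1:ℝ)^2*π^2) * Δ) ^ (2*β) :=
      min_one_le_rpow (by positivity) hb0 hb1
    have hr : (((k+1:ℝ)^2*π^2) * Δ) ^ (2*β) = ((k+1:ℝ)^2)^(2*β) * (π^2*Δ)^(2*β) := by
      rw [show ((k+1:ℝ)^2*π^2) * Δ = ((k+1:ℝ)^2) * (π^2*Δ) by ring,
        Real.mul_rpow (by positivity) (by positivity)]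
    have hE2 : Real.exp (-(((k+1:ℝ)^2*π^2) * m))^2
        = Real.exp (-((k+1:ℝ)^2*(2*π^2*m))) := by
      rw [sq, ← Real.exp_add]; congr 1; ring
    have hexp0 := Real.exp_nonneg (-(((k+1:ℝ)^2*π^2) * m))
    have habs2 : (a k)^2 ≤ (2 * min 1 (((k+1:ℝ)^2*π^2) * Δ)
        * Real.exp (-(((k+1:ℝ)^2*π^2) * m)))^2 := by
      rw [← sq_abs (a k)]
      exact pow_le_pow_left₀ (abs_nonneg _) (habs k) 2
    have hminsq : (min 1 (((k+1:ℝ)^2*π^2) * Δ))^2 ≤ min 1 (((k+1:ℝ)^2*π^2) * Δ) := by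
      nlinarith
    calc (a k)^2 ≤ (2 * min 1 (((k+1:ℝ)^2*π^2) * Δ)
        * Real.exp (-(((k+1:ℝ)^2*π^2) * m)))^2 := habs2
      _ = 4 * (min 1 (((k+1:ℝ)^2*π^2) * Δ))^2
          * Real.exp (-(((k+1:ℝ)^2*π^2) * m))^2 := by ring
      _ ≤ 4 * (((k+1:ℝ)^2*π^2) * Δ) ^ (2*β)
          * Real.exp (-(((k+1:ℝ)^2*π^2) * m))^2 := by
          have h := le_trans hminsq hminr
          have hsq2 := sq_nonneg (Real.exp (-(((k+1:ℝ)^2*π^2) * m)))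
          exact mul_le_mul_of_nonneg_right
            (mul_le_mul_of_nonneg_left h (by norm_num)) hsq2
      _ = (4 * (π^2*Δ)^(2*β)) *
          (((k+1:ℝ)^2)^(2*β) * Real.exp (-((k+1:ℝ)^2*(2*π^2*m)))) := by
          rw [hr, ← hE2]; ring
  -- summability
  have hwsum : Summable (fun k : ℕ =>
      ((k+1:ℝ)^2)^(2*β) * Real.exp (-((k+1:ℝ)^2*(2*π^2*m)))) :=
    summable_weight _ _ (by positivity) hb0
  have ha2sum : Summable (fun k => (a k)^2) :=
    Summable.of_nonneg_of_le (fun k => sq_nonneg _) hsq (hwsum.mul_left _)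
  have haabs : Summable (fun k => |a k|) := by
    refine Summable.of_nonneg_of_le (fun k => abs_nonneg _) (fun k => ?_)
      ((summable_exp_mul (π^2*m) (by positivity)).mul_left 2)
    refine le_trans (habs k) ?_
    have hmin1 : min 1 (((k+1:ℝ)^2*π^2) * Δ) ≤ 1 := min_le_left _ _
    have hmin0 : 0 ≤ min 1 (((k+1:ℝ)^2*π^2) * Δ) :=
      le_min zero_le_one (by positivity)
    have hee : Real.exp (-(((k+1:ℝ)^2*π^2) * m)) ≤ Real.exp (-((k+1:ℝ)*(π^2*m))) := by
      apply Real.exp_le_exp.2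
      have hn : (0:ℝ) ≤ (k:ℝ) := Nat.cast_nonneg k
      have h2 : (k+1:ℝ) ≤ (k+1:ℝ)^2 := by nlinarith
      have h3 : (0:ℝ) < π^2*m := by positivity
      nlinarith
    have he0 := Real.exp_nonneg (-(((k+1:ℝ)^2*π^2) * m))
    calc 2 * min 1 (((k+1:ℝ)^2*π^2) * Δ) * Real.exp (-(((k+1:ℝ)^2*π^2) * m))
        ≤ 2 * 1 * Real.exp (-((k+1:ℝ)*(π^2*m))) := by
          apply mul_le_mul _ hee he0 (by norm_num)
          exact mul_le_mul_of_nonneg_left hmin1 (by norm_num)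
      _ = 2 * Real.exp (-((k+1:ℝ)*(π^2*m))) := by ring
  -- rewrite the integrand
  have hrw : ∀ r : ℝ, GN (t-θ) x' r - GN (t'-θ) x' r
      = ∑' k : ℕ, a k * Real.cos ((k+1:ℝ)*π*r) := by
    intro r
    rw [GN_diff (t-θ) (t'-θ) x' hs hs' r]
  -- main chain
  calc ∫ r in (0:ℝ)..1, (GN (t-θ) x' r - GN (t'-θ) x' r)^2
      = ∫ r in (0:ℝ)..1, (∑' k : ℕ, a k * Real.cos ((k+1:ℝ)*π*r))^2 := by
        simp only [hrw]
    _ ≤ (1/2) * ∑' k, (a k)^2 := parseval_ineq a haabs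
    _ ≤ (1/2) * ∑' k : ℕ, ((4 * (π^2*Δ)^(2*β)) *
        (((k+1:ℝ)^2)^(2*β) * Real.exp (-((k+1:ℝ)^2*(2*π^2*m))))) := by
        apply mul_le_mul_of_nonneg_left
          (Summable.tsum_le_tsum hsq ha2sum (hwsum.mul_left _)) (by norm_num)
    _ = (1/2) * ((4 * (π^2*Δ)^(2*β)) * ∑' k : ℕ,
        (((k+1:ℝ)^2)^(2*β) * Real.exp (-((k+1:ℝ)^2*(2*π^2*m))))) := by
        rw [tsum_mul_left]
    _ ≤ (1/2) * ((4 * (π^2*Δ)^(2*β)) *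
        ((2*(2*β)/(2*π^2*m))^(2*β) * Real.exp 1 * (1/Real.sqrt (2*π^2*m/2)))) := by
        apply mul_le_mul_of_nonneg_left _ (by norm_num)
        apply mul_le_mul_of_nonneg_left
          (sum_weight (2*π^2*m) (2*β) (by positivity) hb0) (by positivity)
    _ ≤ 2 * Real.exp 1 * (2*β)^(2*β) * Δ ^ (2*β) * m ^ (-(1/2) - 2*β) := by
        have hπ : (0:ℝ) < π := Real.pi_pos
        have hπ1 : (1:ℝ) ≤ π := by nlinarith [Real.pi_gt_three]
        have e1 : 2*(2*β)/(2*π^2*m) = (2*β)/(π^2*m) := by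
          rw [div_eq_div_iff (by positivity) (by positivity)]; ring
        have e2 : (π^2*Δ)^(2*β) * ((2*β)/(π^2*m))^(2*β) = (Δ*(2*β)/m)^(2*β) := by
          rw [← Real.mul_rpow (by positivity) (by positivity)]
          congr 1
          field_simp
        have e3 : (Δ*(2*β)/m)^(2*β) = Δ^(2*β)*(2*β)^(2*β)*(m^(2*β))⁻¹ := by
          rw [Real.div_rpow (by positivity) hm.le,
            Real.mul_rpow hΔ0 hb0.le, div_eq_mul_inv]
        have e4 : Real.sqrt (2*π^2*m/2) = π * Real.sqrt m := by
          rw [show 2*π^2*m/2 = π^2*m by ring, Real.sqrt_mul (by positivity),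
            Real.sqrt_sq hπ.le]
        have e5 : m ^ (-(1/2) - 2*β) = (Real.sqrt m)⁻¹ * (m ^ (2*β))⁻¹ := by
          rw [show (-(1/2) - 2*β : ℝ) = (-(1/2)) + (-(2*β)) by ring,
            Real.rpow_add hm, Real.rpow_neg hm.le, Real.rpow_neg hm.le]
          congr 2
          rw [← Real.sqrt_eq_rpow]
        have hsm : 0 < Real.sqrt m := Real.sqrt_pos.2 hm
        have h14 : 1/(π * Real.sqrt m) ≤ (Real.sqrt m)⁻¹ := by
          rw [one_div]
          apply inv_anti₀ hsm
          nlinarith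
        calc (1/2) * ((4 * (π^2*Δ)^(2*β)) *
            ((2*(2*β)/(2*π^2*m))^(2*β) * Real.exp 1 * (1/Real.sqrt (2*π^2*m/2))))
            = 2 * Real.exp 1 * ((π^2*Δ)^(2*β) * ((2*β)/(π^2*m))^(2*β))
              * (1/Real.sqrt (2*π^2*m/2)) := by rw [e1]; ring
          _ = 2 * Real.exp 1 * (Δ^(2*β)*(2*β)^(2*β)*(m^(2*β))⁻¹)
              * (1/(π * Real.sqrt m)) := by rw [e2, e3, e4]
          _ ≤ 2 * Real.exp 1 * (Δ^(2*β)*(2*β)^(2*β)*(m^(2*β))⁻¹)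
              * (Real.sqrt m)⁻¹ := by
              apply mul_le_mul_of_nonneg_left h14
              have h1 := Real.rpow_nonneg hΔ0 (2*β)
              have h2 := Real.rpow_nonneg hb0.le (2*β)
              have h3 := Real.rpow_nonneg hm.le (2*β)
              positivity
          _ = 2 * Real.exp 1 * (2*β)^(2*β) * Δ ^ (2*β) * m ^ (-(1/2) - 2*β) := by
              rw [e5]; ring
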